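/- Commutation with an internal step in a line network: if C →^{(u,t)} C₁ →^{(v,t')} C' in a line topology with d(u,v) ≥ 2 and at least one of t, t' is an internal (τ) transition, then there exists C₂ with C →^{(v,t')} C₂ →^{(u,t)} C'. Moreover, if both t and t' are internal transitions, the two steps commute for any u, v with u ≠ v. -/

import Mathlib

namespace BN

/-- Actions of a broadcast protocol: broadcast `!!m`, reception `?m`, internal `τ`. -/
inductive Act (M : Type) : Type where
  | brd : M → Act M
  | rcv : M → Act M
  | tau : Act M

/-- A broadcast protocol: an initial state and a set of transitions. -/
structure Protocol (Q M : Type) : Type where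
  qin : Q
  delta : Set (Q × Act M × Q)

variable {Q M V : Type}

/-- `q` has an outgoing reception of `m`. -/
def canRecv (P : Protocol Q M) (q : Q) (m : M) : Prop :=
  ∃ q', (q, Act.rcv m, q') ∈ P.delta

/-- One step of the broadcast network semantics over topology `G`,
performed by vertex `v` taking transition `t`. -/
def Step (G : SimpleGraph V) (P : Protocol Q M) (v : V)
    (t : Q × Act M × Q) (L L' : V → Q) : Prop :=
  t ∈ P.delta ∧ L v = t.1 ∧ L' v = t.2.2 ∧
  (match t.2.1 with
   | Act.tau => ∀ u, u ≠ v → L' u = L u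
   | Act.brd m =>
       (∀ u, G.Adj v u →
          ((L u, Act.rcv m, L' u) ∈ P.delta ∨ (¬ canRecv P (L u) m ∧ L' u = L u))) ∧
       (∀ u, u ≠ v → ¬ G.Adj v u → L' u = L u)
   | Act.rcv _ => False)

def StepAny (G : SimpleGraph V) (P : Protocol Q M) (L L' : V → Q) : Prop :=
  ∃ v t, Step G P v t L L'

def Reach (G : SimpleGraph V) (P : Protocol Q M) : (V → Q) → (V → Q) → Prop :=
  Relation.ReflTransGen (StepAny G P)

def initConf (P : Protocol Q M) : V → Q := fun _ => P.qin

/-- `qf` is coverable over the class of all (finite) graph topologies. -/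
def Coverable (P : Protocol Q M) (qf : Q) : Prop :=
  ∃ (V' : Type) (_ : Fintype V') (G : SimpleGraph V') (L : V' → Q),
    Reach G P (initConf P) L ∧ ∃ v, L v = qf

/-- A tree topology: a prefix-closed finite set of words over ℕ containing ε. -/
structure TreeTopo : Type where
  verts : Finset (List ℕ)
  nil_mem : ([] : List ℕ) ∈ verts
  prefixClosed : ∀ w ∈ verts, ∀ w' : List ℕ, w' <+: w → w' ∈ verts

abbrev TreeTopo.Vert (T : TreeTopo) : Type := {w : List ℕ // w ∈ T.verts}

def TreeTopo.root (T : TreeTopo) : T.Vert := ⟨[], T.nil_mem⟩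

/-- The graph of a tree topology: each word `w ++ [x]` is adjacent to its parent `w`. -/
def TreeTopo.graph (T : TreeTopo) : SimpleGraph T.Vert where
  Adj u v := (∃ x : ℕ, (v : List ℕ) = (u : List ℕ) ++ [x]) ∨
             (∃ x : ℕ, (u : List ℕ) = (v : List ℕ) ++ [x])
  symm := by constructor; intro u v h; exact h.symm
  loopless := by
    constructor
    intro u h
    rcases h with ⟨x, hx⟩ | ⟨x, hx⟩ <;> simpa using congrArg List.length hx

def CoverableWith (T : TreeTopo) (P : Protocol Q M) (qf : Q) : Prop :=
  ∃ L : T.Vert → Q, Reach T.graph P (initConf P) L ∧ ∃ u, L u = qf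

def CoverableTreeRoot (P : Protocol Q M) (qf : Q) : Prop :=
  ∃ (T : TreeTopo) (L : T.Vert → Q),
    Reach T.graph P (initConf P) L ∧ L T.root = qf

/-- `(T, lam)` is the unfolding of graph `G` at vertex `v` to depth `n`. -/
structure IsUnfolding {V : Type} (G : SimpleGraph V) (v : V) (n : ℕ)
    (T : TreeTopo) (lam : T.Vert → V) : Prop where
  root_lbl : lam T.root = v
  depth_le : ∀ w ∈ T.verts, w.length ≤ n
  root_children :
    Set.BijOn lam {u : T.Vert | ∃ x : ℕ, (u : List ℕ) = [x]} (G.neighborSet v)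
  children : ∀ (u : T.Vert) (w : List ℕ) (hw : w ∈ T.verts) (x : ℕ),
      (u : List ℕ) = w ++ [x] → (u : List ℕ).length < n →
      Set.BijOn lam {u' : T.Vert | ∃ y : ℕ, (u' : List ℕ) = (u : List ℕ) ++ [y]}
        (G.neighborSet (lam u) \ {lam ⟨w, hw⟩})
  no_deep : ∀ u : T.Vert, n ≤ (u : List ℕ).length →
      ∀ x : ℕ, (u : List ℕ) ++ [x] ∉ T.verts

/-- Phase tags annotating states: `zero` (phase 0), broadcast phase `j`, reception phase `j`. -/
inductive PTag : Type where
  | zero : PTag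
  | bph : ℕ → PTag
  | rph : ℕ → PTag
deriving DecidableEq

def bOf : ℕ → PTag
  | 0 => .zero
  | j+1 => .bph (j+1)

def rOf : ℕ → PTag
  | 0 => .zero
  | j+1 => .rph (j+1)

/-- `φ` witnesses that `P` is `k`-phase-bounded. -/
def IsPhaseAssignment (k : ℕ) (P : Protocol Q M) (φ : Q → PTag) : Prop :=
  φ P.qin = .zero ∧
  (∀ q : Q, φ q = .zero ∨ ∃ j, 1 ≤ j ∧ j ≤ k ∧ (φ q = .bph j ∨ φ q = .rph j)) ∧
  ∀ t ∈ P.delta,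
    (match t.2.1 with
     | Act.tau => φ t.1 = φ t.2.2
     | Act.brd _ =>
         (∃ j, 1 ≤ j ∧ j ≤ k ∧ φ t.1 = .bph j ∧ φ t.2.2 = .bph j) ∨
         (∃ i, i < k ∧ φ t.1 = rOf i ∧ φ t.2.2 = .bph (i+1))
     | Act.rcv _ =>
         (∃ j, 1 ≤ j ∧ j ≤ k ∧ φ t.1 = .rph j ∧ φ t.2.2 = .rph j) ∨
         (∃ i, i < k ∧ φ t.1 = bOf i ∧ φ t.2.2 = .rph (i+1)) ∨
         (1 ≤ k ∧ φ t.1 = .bph k ∧ φ t.2.2 = .rph k))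

def IsPhaseBounded (k : ℕ) (P : Protocol Q M) : Prop :=
  ∃ φ : Q → PTag, IsPhaseAssignment k P φ

/-- The `k`-unfolding `Pₖ` of a protocol `P`. -/
def unfoldP (P : Protocol Q M) (k : ℕ) : Protocol (Q × PTag) M where
  qin := (P.qin, .zero)
  delta :=
    {t | ∃ q p, (q, Act.tau, p) ∈ P.delta ∧ t = ((q, .zero), Act.tau, (p, .zero))} ∪
    {t | ∃ q p α j, 1 ≤ j ∧ j ≤ k ∧ (q, α, p) ∈ P.delta ∧
        (α = Act.tau ∨ ∃ m, α = Act.rcv m) ∧ t = ((q, .rph j), α, (p, .rph j))} ∪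
    {t | ∃ q p α j, 1 ≤ j ∧ j ≤ k ∧ (q, α, p) ∈ P.delta ∧
        (α = Act.tau ∨ ∃ m, α = Act.brd m) ∧ t = ((q, .bph j), α, (p, .bph j))} ∪
    {t | ∃ q p m j, j < k ∧ (q, Act.brd m, p) ∈ P.delta ∧
        t = ((q, rOf j), Act.brd m, (p, .bph (j+1)))} ∪
    {t | ∃ q p m j, j < k ∧ (q, Act.rcv m, p) ∈ P.delta ∧
        t = ((q, bOf j), Act.rcv m, (p, .rph (j+1)))} ∪
    {t | ∃ q p m, 1 ≤ k ∧ (q, Act.rcv m, p) ∈ P.delta ∧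
        t = ((q, .bph k), Act.rcv m, (p, .rph k))}

/-- Star topology: root `none` adjacent to every leaf `some i`, no other edges. -/
def starGraph (ι : Type) : SimpleGraph (Option ι) where
  Adj u v := (u = none ∧ v ≠ none) ∨ (v = none ∧ u ≠ none)
  symm := by constructor; intro u v h; tauto
  loopless := by constructor; intro u h; tauto

/-- For a 1-phase-bounded protocol with witness `φ`, `Q^b = Q₀ ∪ Q₁^b`. -/
def Qb (φ : Q → PTag) : Set Q := {q | φ q = .zero ∨ φ q = .bph 1}

/-- The set component of the broadcast-print of a star configuration. -/
def bprintSet {ι : Type} (φ : Q → PTag) (L : Option ι → Q) : Set Q :=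
  {q | q ∈ Qb φ ∧ ∃ i, L (some i) = q}

/-- The abstract transition relation `⇒` on broadcast-prints. -/
def PrintStep (P : Protocol Q M) (φ : Q → PTag) :
    (Q × Set Q) → (Q × Set Q) → Prop := fun pr pr' =>
  ∃ (ι : Type) (_ : Fintype ι) (L L' : Option ι → Q),
    StepAny (starGraph ι) P L L' ∧ L none ∈ Qb φ ∧ L' none ∈ Qb φ ∧
    pr = (L none, bprintSet φ L) ∧ pr' = (L' none, bprintSet φ L')

/-- Line topology on `Fin ℓ`: consecutive vertices are adjacent. -/
def lineGraph (ℓ : ℕ) : SimpleGraph (Fin ℓ) where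
  Adj i j := (i : ℕ) + 1 = (j : ℕ) ∨ (j : ℕ) + 1 = (i : ℕ)
  symm := by constructor; intro i j h; tauto
  loopless := by constructor; intro i h; rcases h with h | h <;> omega

/-- `t` is a broadcast transition. -/
def IsBrdT (t : Q × Act M × Q) : Prop := ∃ m, t.2.1 = Act.brd m

/-- In the execution described by `vs, ts` of length `n`, `i` is the first index at
which vertex `u` performs a broadcast. -/
def IsFirstBrd {V' : Type} (vs : ℕ → V') (ts : ℕ → Q × Act M × Q) (n : ℕ)
    (u : V') (i : ℕ) : Prop :=
  i < n ∧ vs i = u ∧ IsBrdT (ts i) ∧ ∀ j < i, vs j = u → ¬ IsBrdT (ts j)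

/-- Every transition of `u` occurs no later than every broadcast of `w`
(i.e. lastBroadcast(u) ≤ firstBroadcast(w)). -/
def BrdOrder {V' : Type} (n : ℕ) (vs : ℕ → V') (ts : ℕ → Q × Act M × Q)
    (u w : V') : Prop :=
  ∀ j j', j < n → j' < n → vs j = u → vs j' = w → IsBrdT (ts j') → j ≤ j'

/-- One application of the pair-coverability operator. -/
def pairStep (P : Protocol Q M) (S : Set (Q × Q)) : Set (Q × Q) :=
  S ∪
  {p | ∃ p₁, (p₁, p.2) ∈ S ∧ (p₁, Act.tau, p.1) ∈ P.delta} ∪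
  {p | ∃ p₂, (p.1, p₂) ∈ S ∧ (p₂, Act.tau, p.2) ∈ P.delta} ∪
  {p | ∃ p₁ p₂ m, (p₁, p₂) ∈ S ∧ (p₂, Act.brd m, p.2) ∈ P.delta ∧
      (p₁, Act.rcv m, p.1) ∈ P.delta} ∪
  {p | ∃ p₂ m, (p.1, p₂) ∈ S ∧ (p₂, Act.brd m, p.2) ∈ P.delta ∧ ¬ canRecv P p.1 m} ∪
  {p | p.1 = P.qin ∧ ∃ q', (p.2, q') ∈ S}

/-- The iteration `S₀ ⊆ S₁ ⊆ …` of the pair-coverability operator. -/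
def Siter (P : Protocol Q M) : ℕ → Set (Q × Q)
  | 0 => {(P.qin, P.qin)}
  | i+1 => pairStep P (Siter P i)


/-!
A step at `v` reads and writes only the states of `v` and its neighbours, and an internal
step only the state of `v`. So when neither vertex is a neighbour of the other, an internal
step at one of them can be undone before the step at the other and redone after it. Two
internal steps are updates at distinct vertices and commute as such, adjacent or not.
-/

open Function

section StepFrame

variable {G : SimpleGraph V} {P : Protocol Q M} {v w : V} {t : Q × Act M × Q} {L L' : V → Q}

theorem Step.apply_eq_of_not_adj (h : Step G P v t L L') (hwv : w ≠ v) (hvw : ¬ G.Adj v w) :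
    L' w = L w := by
  obtain ⟨q, a, q'⟩ := t
  obtain ⟨-, -, -, hrest⟩ := h
  cases a with
  | brd m => exact hrest.2 w hwv hvw
  | rcv m => exact hrest.elim
  | tau => exact hrest w hwv

variable [DecidableEq V]

theorem step_tau_iff (ht : t.2.1 = Act.tau) :
    Step G P v t L L' ↔ t ∈ P.delta ∧ L v = t.1 ∧ L' = update L v t.2.2 := by
  obtain ⟨q, a, q'⟩ := t
  subst ht
  simp only [Step, funext_iff, update_apply]
  constructor
  · rintro ⟨hδ, hv, hv', hrest⟩
    exact ⟨hδ, hv, fun u => by by_cases hu : u = v <;> simp_all⟩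
  · rintro ⟨hδ, hv, hL'⟩
    exact ⟨hδ, hv, by simpa using hL' v, fun u hu => by simpa [hu] using hL' u⟩

theorem Step.update_of_not_adj (h : Step G P v t L L') (hwv : w ≠ v) (hvw : ¬ G.Adj v w)
    (a : Q) : Step G P v t (update L w a) (update L' w a) := by
  obtain ⟨q, α, q'⟩ := t
  obtain ⟨hδ, hv, hv', hrest⟩ := h
  refine ⟨hδ, by simpa [hwv.symm] using hv, by simpa [hwv.symm] using hv', ?_⟩
  cases α with
  | brd m =>
    refine ⟨fun u hvu => ?_, fun u huv hvu => ?_⟩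
    · have huw : u ≠ w := by rintro rfl; exact hvw hvu
      simpa [huw] using hrest.1 u hvu
    · by_cases huw : u = w
      · simp [huw]
      · simpa [huw] using hrest.2 u huv hvu
  | rcv m => exact hrest.elim
  | tau =>
    intro u huv
    by_cases huw : u = w
    · simp [huw]
    · simpa [huw] using hrest u huv

end StepFrame

section Commute

variable [DecidableEq V] {G : SimpleGraph V} {P : Protocol Q M} {u v : V} {t t' : Q × Act M × Q}
  {C C₁ C' : V → Q}

theorem Step.swap_of_tau_left (h₁ : Step G P u t C C₁) (h₂ : Step G P v t' C₁ C')
    (huv : u ≠ v) (hadj : ¬ G.Adj v u) (ht : t.2.1 = Act.tau) :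
    ∃ C₂, Step G P v t' C C₂ ∧ Step G P u t C₂ C' := by
  obtain ⟨hδ, hu, rfl⟩ := (step_tau_iff ht).1 h₁
  have hC'u : C' u = t.2.2 := by simpa using h₂.apply_eq_of_not_adj huv hadj
  refine ⟨update C' u (C u), by simpa using h₂.update_of_not_adj huv hadj (C u), ?_⟩
  exact (step_tau_iff ht).2 ⟨hδ, by simpa using hu, by simp [← hC'u]⟩

theorem Step.swap_of_tau_right (h₁ : Step G P u t C C₁) (h₂ : Step G P v t' C₁ C')
    (huv : u ≠ v) (hadj : ¬ G.Adj u v) (ht' : t'.2.1 = Act.tau) :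
    ∃ C₂, Step G P v t' C C₂ ∧ Step G P u t C₂ C' := by
  obtain ⟨hδ, hv, rfl⟩ := (step_tau_iff ht').1 h₂
  have hCv : C₁ v = C v := h₁.apply_eq_of_not_adj huv.symm hadj
  exact ⟨update C v t'.2.2, (step_tau_iff ht').2 ⟨hδ, hCv ▸ hv, rfl⟩,
    h₁.update_of_not_adj huv.symm hadj _⟩

theorem Step.swap_of_tau_tau (h₁ : Step G P u t C C₁) (h₂ : Step G P v t' C₁ C')
    (huv : u ≠ v) (ht : t.2.1 = Act.tau) (ht' : t'.2.1 = Act.tau) :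
    ∃ C₂, Step G P v t' C C₂ ∧ Step G P u t C₂ C' := by
  obtain ⟨hδ, hu, rfl⟩ := (step_tau_iff ht).1 h₁
  obtain ⟨hδ', hv, rfl⟩ := (step_tau_iff ht').1 h₂
  refine ⟨update C v t'.2.2, (step_tau_iff ht').2 ⟨hδ', by simpa [huv.symm] using hv, rfl⟩,
    (step_tau_iff ht).2 ⟨hδ, by simpa [huv] using hu, update_comm huv _ _ _⟩⟩

end Commute

theorem lineGraph_not_adj_of_two_le_dist {ℓ : ℕ} {u v : Fin ℓ}
    (h : 2 ≤ Nat.dist (u : ℕ) (v : ℕ)) : ¬ (lineGraph ℓ).Adj u v := by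
  rintro (huv | huv) <;> simp only [Nat.dist] at h <;> omega

/-- a step commutes with an internal step at distance ≥ 2 in a line;
moreover two internal steps at distinct vertices always commute. -/
theorem line_commute_internal {Q M : Type} (P : Protocol Q M) (ℓ : ℕ) :
    (∀ (u v : Fin ℓ) (t t' : Q × Act M × Q) (C C₁ C' : Fin ℓ → Q),
      2 ≤ Nat.dist (u : ℕ) (v : ℕ) →
      (t.2.1 = Act.tau ∨ t'.2.1 = Act.tau) →
      Step (lineGraph ℓ) P u t C C₁ → Step (lineGraph ℓ) P v t' C₁ C' →
      ∃ C₂, Step (lineGraph ℓ) P v t' C C₂ ∧ Step (lineGraph ℓ) P u t C₂ C') ∧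
    (∀ (u v : Fin ℓ) (t t' : Q × Act M × Q) (C C₁ C' : Fin ℓ → Q),
      u ≠ v → t.2.1 = Act.tau → t'.2.1 = Act.tau →
      Step (lineGraph ℓ) P u t C C₁ → Step (lineGraph ℓ) P v t' C₁ C' →
      ∃ C₂, Step (lineGraph ℓ) P v t' C C₂ ∧ Step (lineGraph ℓ) P u t C₂ C') := by
  refine ⟨fun u v t t' C C₁ C' hdist htau h₁ h₂ => ?_,
    fun u v t t' C C₁ C' huv ht ht' h₁ h₂ => h₁.swap_of_tau_tau h₂ huv ht ht'⟩
  have hnadj : ¬ (lineGraph ℓ).Adj u v := lineGraph_not_adj_of_two_le_dist hdist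
  have huv : u ≠ v := by rintro rfl; simp at hdist
  rcases htau with ht | ht'
  · exact h₁.swap_of_tau_left h₂ huv (fun h => hnadj h.symm) ht
  · exact h₁.swap_of_tau_right h₂ huv hnadj ht'

end BN
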